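/- Under the same assumptions, the quadratic form admits the decomposition ⟨𝔗[h,βb]u, u⟩ = ∫_{ℝᵈ} h|u|² + (μ/12) h³ |∇·u|² + (μ/4) h |h∇·u − 2β∇b·u|², and consequently the coercivity estimate ‖u‖²_{X⁰} = ‖u‖²_{L²} + μ‖∇·u‖²_{L²} ≤ C(h⋆^{-1}) ⟨𝔗[h,βb]u, u⟩ holds with a constant C depending only on h⋆^{-1} (e.g. C = max(1/h⋆, 12/h⋆³)). -/

import Mathlib

open MeasureTheory Finset

set_option maxHeartbeats 1000000
noncomputable section

/-- Partial derivative in the `i`-th coordinate direction. -/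
def pdv {d : ℕ} {F : Type*} [NormedAddCommGroup F] [NormedSpace ℝ F]
    (i : Fin d) (f : (Fin d → ℝ) → F) (x : Fin d → ℝ) : F :=
  fderiv ℝ f x (Pi.single i 1)

/-- Divergence of a vector field on `ℝᵈ`. -/
def divg {d : ℕ} (u : (Fin d → ℝ) → (Fin d → ℝ)) (x : Fin d → ℝ) : ℝ :=
  ∑ i, pdv i (fun y => u y i) x

/-- The quadratic form `⟨𝔗[h,βb]u, u⟩ = ∫ h|u|² + (μ/3) h³ (∇·u)²
− μ h² (∇·u)(β∇b·u) + μ h (β∇b·u)²`. -/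
def Qform (d : ℕ) (μ β : ℝ) (h b : (Fin d → ℝ) → ℝ)
    (u : (Fin d → ℝ) → (Fin d → ℝ)) : ℝ :=
  ∫ x : Fin d → ℝ,
    (h x * (∑ i, (u x i) ^ 2)
      + (μ / 3) * (h x) ^ 3 * (divg u x) ^ 2
      - μ * (h x) ^ 2 * (divg u x * (∑ i, β * pdv i b x * u x i))
      + μ * h x * (∑ i, β * pdv i b x * u x i) ^ 2)

/-- A finite sum of compactly supported functions has compact support. -/
lemma hcs_finsum {α : Type*} [TopologicalSpace α] {ι : Type*} (s : Finset ι)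
    (f : ι → α → ℝ) (hf : ∀ i ∈ s, HasCompactSupport (f i)) :
    HasCompactSupport (fun x => ∑ i ∈ s, f i x) := by
  classical
  induction s using Finset.induction_on with
  | empty => simp only [Finset.sum_empty]; exact HasCompactSupport.zero
  | insert _ _ hnotmem ih =>
    simp only [Finset.sum_insert hnotmem]
    exact (hf _ (Finset.mem_insert_self _ _)).add
      (ih fun i hi => hf i (Finset.mem_insert_of_mem hi))

lemma pdv_cont {d : ℕ} {g : (Fin d → ℝ) → ℝ} (hg : ContDiff ℝ (⊤ : ℕ∞) g) (i : Fin d) :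
    Continuous (pdv i g) :=
  (hg.continuous_fderiv (by simp)).clm_apply continuous_const

lemma pdv_hcs {d : ℕ} {g : (Fin d → ℝ) → ℝ} (hg : HasCompactSupport g) (i : Fin d) :
    HasCompactSupport (pdv i g) :=
  (hg.fderiv (𝕜 := ℝ)).comp_left
    (g := fun L : (Fin d → ℝ) →L[ℝ] ℝ => L (Pi.single i 1)) (by simp)

/-- decomposition
`⟨𝔗[h,βb]u,u⟩ = ∫ h|u|² + (μ/12) h³|∇·u|² + (μ/4) h |h∇·u − 2β∇b·u|²`
and the coercivity estimate
`‖u‖²_{L²} + μ‖∇·u‖²_{L²} ≤ max(1/h⋆, 12/h⋆³) ⟨𝔗[h,βb]u,u⟩`. -/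
theorem Tform_decomposition_and_coercivity (d : ℕ) (μ β h₀ : ℝ)
    (hμ : 0 ≤ μ) (hβ : 0 ≤ β) (hh₀ : 0 < h₀)
    (h b : (Fin d → ℝ) → ℝ)
    (hh : ContDiff ℝ (⊤ : ℕ∞) h) (hb : ContDiff ℝ (⊤ : ℕ∞) b)
    (hlow : ∀ x, h₀ ≤ h x)
    (u : (Fin d → ℝ) → (Fin d → ℝ))
    (hu : ContDiff ℝ (⊤ : ℕ∞) u) (hs : HasCompactSupport u) :
    Qform d μ β h b u
      = ∫ x : Fin d → ℝ,
          (h x * (∑ i, (u x i) ^ 2)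
            + (μ / 12) * (h x) ^ 3 * (divg u x) ^ 2
            + (μ / 4) * h x *
                (h x * divg u x - 2 * (∑ i, β * pdv i b x * u x i)) ^ 2)
    ∧ (∫ x : Fin d → ℝ, ∑ i, (u x i) ^ 2)
          + μ * ∫ x : Fin d → ℝ, (divg u x) ^ 2
        ≤ max (1 / h₀) (12 / h₀ ^ 3) * Qform d μ β h b u := by
  -- notation
  set S : (Fin d → ℝ) → ℝ := fun x => ∑ i, β * pdv i b x * u x i with hS
  -- continuity facts
  have hcui : ∀ i, Continuous fun x => u x i := fun i =>
    (continuous_apply i).comp hu.continuous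
  have hcsui : ∀ i, HasCompactSupport fun x => u x i := fun i =>
    hs.comp_left (g := fun v : Fin d → ℝ => v i) rfl
  have hcF : Continuous fun x => ∑ i, (u x i) ^ 2 :=
    continuous_finset_sum _ fun i _ => (hcui i).pow 2
  have hcsF : HasCompactSupport fun x => ∑ i, (u x i) ^ 2 :=
    hcs_finsum _ _ fun i _ => (hcsui i).comp_left (g := fun t : ℝ => t ^ 2) (by simp)
  have hcD : Continuous (divg u) := by
    unfold divg
    exact continuous_finset_sum _ fun i _ => pdv_cont (contDiff_pi.mp hu i) i
  have hcsD : HasCompactSupport (divg u) := by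
    unfold divg
    exact hcs_finsum _ _ fun i _ => pdv_hcs (hcsui i) i
  have hcS : Continuous S :=
    continuous_finset_sum _ fun i _ => (continuous_const.mul (pdv_cont hb i)).mul (hcui i)
  have hcsS : HasCompactSupport S := by
    apply hcs_finsum
    intro i _
    exact show HasCompactSupport ((fun x => β * pdv i b x) * (fun x => u x i)) from
      (hcsui i).mul_left
  have hch : Continuous h := hh.continuous
  -- integrability facts
  have I1 : Integrable (fun x : Fin d → ℝ => ∑ i, (u x i) ^ 2) :=
    hcF.integrable_of_hasCompactSupport hcsF
  have I2 : Integrable (fun x : Fin d → ℝ => (divg u x) ^ 2) :=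
    ((continuous_pow 2).comp hcD).integrable_of_hasCompactSupport
      (hcsD.comp_left (g := fun t : ℝ => t ^ 2) (by simp))
  have IA : Integrable (fun x : Fin d → ℝ => h x * ∑ i, (u x i) ^ 2) :=
    (hch.mul hcF).integrable_of_hasCompactSupport
      (show HasCompactSupport (h * fun x => ∑ i, (u x i) ^ 2) from hcsF.mul_left)
  have IB : Integrable (fun x : Fin d → ℝ => (μ / 12) * (h x) ^ 3 * (divg u x) ^ 2) :=
    ((continuous_const.mul ((continuous_pow 3).comp hch)).mul ((continuous_pow 2).comp hcD)).integrable_of_hasCompactSupport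
      (show HasCompactSupport ((fun x => (μ / 12) * (h x) ^ 3) * fun x => (divg u x) ^ 2) from
        HasCompactSupport.mul_left (hcsD.comp_left (g := fun t : ℝ => t ^ 2) (by simp)))
  have hcsQ : HasCompactSupport (fun x => h x * divg u x - 2 * S x) := by
    have h1 : HasCompactSupport (h * divg u) := hcsD.mul_left
    have h2 : HasCompactSupport ((fun _ => (2:ℝ)) * S) := hcsS.mul_left
    exact h1.comp₂_left h2 (by simp : (0:ℝ) - 0 = 0)
  have IC : Integrable
      (fun x : Fin d → ℝ => (μ / 4) * h x * (h x * divg u x - 2 * S x) ^ 2) :=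
    ((continuous_const.mul hch).mul
      ((continuous_pow 2).comp ((hch.mul hcD).sub (continuous_const.mul hcS)))).integrable_of_hasCompactSupport
      (show HasCompactSupport ((fun x => (μ / 4) * h x) *
          fun x => (h x * divg u x - 2 * S x) ^ 2) from
        HasCompactSupport.mul_left (hcsQ.comp_left (g := fun t : ℝ => t ^ 2) (by simp)))
  -- the decomposition (pointwise identity)
  have hQ : Qform d μ β h b u
      = ∫ x : Fin d → ℝ,
          (h x * (∑ i, (u x i) ^ 2)
            + (μ / 12) * (h x) ^ 3 * (divg u x) ^ 2
            + (μ / 4) * h x * (h x * divg u x - 2 * S x) ^ 2) := by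
    unfold Qform
    exact integral_congr_ae (Filter.Eventually.of_forall fun x => by simp only [hS]; ring)
  refine ⟨hQ, ?_⟩
  set M : ℝ := max (1 / h₀) (12 / h₀ ^ 3) with hMdef
  have hM1 : 1 / h₀ ≤ M := le_max_left _ _
  have hM2 : 12 / h₀ ^ 3 ≤ M := le_max_right _ _
  have hM0 : 0 ≤ M := le_trans (by positivity) hM1
  have hM1' : 1 ≤ M * h₀ := (div_le_iff₀ hh₀).mp hM1
  have hM2' : 12 ≤ M * h₀ ^ 3 := (div_le_iff₀ (by positivity)).mp hM2
  -- pointwise coercivity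
  have hpt : ∀ x : Fin d → ℝ,
      (∑ i, (u x i) ^ 2) + μ * (divg u x) ^ 2
        ≤ M * (h x * (∑ i, (u x i) ^ 2)
            + (μ / 12) * (h x) ^ 3 * (divg u x) ^ 2
            + (μ / 4) * h x * (h x * divg u x - 2 * S x) ^ 2) := by
    intro x
    have hhx : (0:ℝ) < h x := lt_of_lt_of_le hh₀ (hlow x)
    have hF0 : 0 ≤ ∑ i, (u x i) ^ 2 := Finset.sum_nonneg fun i _ => sq_nonneg _
    have hD0 : 0 ≤ (divg u x) ^ 2 := sq_nonneg _
    have hp3 : h₀ ^ 3 ≤ (h x) ^ 3 := pow_le_pow_left₀ hh₀.le (hlow x) 3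
    have t1 : (∑ i, (u x i) ^ 2) ≤ M * (h x * (∑ i, (u x i) ^ 2)) := by
      nlinarith [mul_nonneg (mul_nonneg hM0 (sub_nonneg.mpr (hlow x))) hF0,
        mul_nonneg (sub_nonneg.mpr hM1') hF0]
    have t2 : μ * (divg u x) ^ 2 ≤ M * ((μ / 12) * (h x) ^ 3 * (divg u x) ^ 2) := by
      nlinarith [mul_nonneg (mul_nonneg (by linarith : (0:ℝ) ≤ μ / 12)
          (sub_nonneg.mpr hM2')) hD0,
        mul_nonneg (mul_nonneg (mul_nonneg (by linarith : (0:ℝ) ≤ μ / 12) hM0)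
          (sub_nonneg.mpr hp3)) hD0]
    have t3 : 0 ≤ M * ((μ / 4) * h x * (h x * divg u x - 2 * S x) ^ 2) :=
      mul_nonneg hM0 (mul_nonneg (mul_nonneg (by linarith) hhx.le) (sq_nonneg _))
    nlinarith [t1, t2, t3]
  -- integrate
  have e1 : (∫ x : Fin d → ℝ, ∑ i, (u x i) ^ 2) + μ * ∫ x : Fin d → ℝ, (divg u x) ^ 2
      = ∫ x : Fin d → ℝ, ((∑ i, (u x i) ^ 2) + μ * (divg u x) ^ 2) := by
    rw [← integral_const_mul, ← integral_add I1 (I2.const_mul μ)]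
  have e2 : ∫ x : Fin d → ℝ, ((∑ i, (u x i) ^ 2) + μ * (divg u x) ^ 2)
      ≤ ∫ x : Fin d → ℝ, M * (h x * (∑ i, (u x i) ^ 2)
            + (μ / 12) * (h x) ^ 3 * (divg u x) ^ 2
            + (μ / 4) * h x * (h x * divg u x - 2 * S x) ^ 2) :=
    integral_mono (I1.add (I2.const_mul μ)) (((IA.add IB).add IC).const_mul M) hpt
  have e3 : (∫ x : Fin d → ℝ, M * (h x * (∑ i, (u x i) ^ 2)
            + (μ / 12) * (h x) ^ 3 * (divg u x) ^ 2
            + (μ / 4) * h x * (h x * divg u x - 2 * S x) ^ 2))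
      = M * Qform d μ β h b u := by
    rw [integral_const_mul, hQ]
  linarith [e2, e1.le, e1.ge, e3.le, e3.ge]
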